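/- With the T-TBS sample-size Markov chain started at C_0 = n and generating function m_t(s) = E[s^{C_t}], one has m_t(s) = (p^t(s−1)+1)^n · ∏_{j=0}^{t−1} G(q p^j (s−1) + 1) for all s > 0, where G(u) = E[u^B] is the common probability generating function of the batch sizes. -/

import Mathlib

/-!
Conditionally on `(C t, B (t + 1))`, the survivors `R (t + 1)` and the arrivals `A (t + 1)` are
independent binomial thinnings, and a `Binomial (k, r)` variable has generating function
`s ↦ (r (s - 1) + 1) ^ k`. Hence `m_{t+1}(s) = m_t(p (s - 1) + 1) · G(q (s - 1) + 1)`, and unrolling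
this recursion along the affine maps `s ↦ p (s - 1) + 1` down to `m_0(s) = s ^ n` gives the
product formula.
-/

open MeasureTheory

/-- The probability that a `Binomial (k, r)` random variable equals `i`. -/
noncomputable def binomPMF (r : ℝ) (k i : ℕ) : ℝ :=
  if i ≤ k then (k.choose i : ℝ) * r ^ i * (1 - r) ^ (k - i) else 0

open ENNReal Set

theorem binomPMF_nonneg {r : ℝ} (hr0 : 0 ≤ r) (hr1 : r ≤ 1) (k i : ℕ) : 0 ≤ binomPMF r k i := by
  unfold binomPMF
  split_ifs
  · have : 0 ≤ 1 - r := sub_nonneg.2 hr1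
    positivity
  · exact le_rfl

theorem binomPMF_eq_zero_of_lt {r : ℝ} {k i : ℕ} (h : k < i) : binomPMF r k i = 0 :=
  if_neg h.not_ge

theorem sum_binomPMF_mul_pow (r s : ℝ) (k : ℕ) :
    ∑ i ∈ Finset.range (k + 1), binomPMF r k i * s ^ i = (r * (s - 1) + 1) ^ k := by
  rw [show r * (s - 1) + 1 = r * s + (1 - r) by ring, add_pow]
  refine Finset.sum_congr rfl fun i hi => ?_
  rw [binomPMF, if_pos (Nat.lt_succ_iff.1 (Finset.mem_range.1 hi))]
  ring

theorem tsum_ofReal_binomPMF_mul_pow {r s : ℝ} (hr0 : 0 ≤ r) (hr1 : r ≤ 1) (hs : 0 ≤ s) (k : ℕ) :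
    ∑' i, ENNReal.ofReal (binomPMF r k i) * ENNReal.ofReal (s ^ i)
      = ENNReal.ofReal ((r * (s - 1) + 1) ^ k) := by
  rw [tsum_eq_sum (s := Finset.range (k + 1)) fun i hi => by
      rw [binomPMF_eq_zero_of_lt (by simpa using hi), ENNReal.ofReal_zero, zero_mul],
    ← sum_binomPMF_mul_pow, ENNReal.ofReal_sum_of_nonneg fun i _ =>
      mul_nonneg (binomPMF_nonneg hr0 hr1 k i) (pow_nonneg hs i)]
  exact Finset.sum_congr rfl fun i _ => (ENNReal.ofReal_mul (binomPMF_nonneg hr0 hr1 k i)).symm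

theorem ENNReal.tsum_mul_tsum {α β : Type*} (f : α → ℝ≥0∞) (g : β → ℝ≥0∞) :
    (∑' a, f a) * ∑' b, g b = ∑' x : α × β, f x.1 * g x.2 := by
  rw [ENNReal.tsum_prod', ← ENNReal.tsum_mul_right]
  exact tsum_congr fun a => ENNReal.tsum_mul_left.symm

section Cover

variable {Ω ι : Type*} [MeasurableSpace Ω] {μ : Measure Ω} [IsFiniteMeasure μ] [Countable ι]
  {E : ι → Set Ω}

/-- The sets `E v` need not be measurable, so `μ` is not additive on them; the total mass
condition `htot` is what replaces additivity. -/
theorem measure_eq_tsum_of_tsum_eq_measure_univ (hcov : ∀ ω, ∃ v, ω ∈ E v)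
    (htot : ∑' v, μ (E v) = μ univ) {S : Set Ω} (hS : MeasurableSet S) {s : Set ι}
    (hs : ∀ v ∈ s, E v ⊆ S) (hsc : ∀ v ∉ s, E v ⊆ Sᶜ) :
    μ S = ∑' v : s, μ (E v) := by
  have cover : ∀ (T : Set Ω) (t : Set ι), (∀ ω ∈ T, ∀ v, ω ∈ E v → v ∈ t) →
      μ T ≤ ∑' v : t, μ (E v) := fun T t ht =>
    (measure_mono fun ω hω => by
        obtain ⟨v, hv⟩ := hcov ω
        exact mem_biUnion (ht ω hω v hv) hv).trans
      (measure_biUnion_le μ t.to_countable E)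
  have hle : μ S ≤ ∑' v : s, μ (E v) :=
    cover S s fun ω hω v hv => by_contra fun h => hsc v h hv hω
  have hle_compl : μ Sᶜ ≤ ∑' v : ↑sᶜ, μ (E v) :=
    cover Sᶜ sᶜ fun ω hω v hv h => hω (hs v h hv)
  refine le_antisymm hle ((ENNReal.add_le_add_iff_right (measure_ne_top μ Sᶜ)).1 ?_)
  calc ∑' v : s, μ (E v) + μ Sᶜ ≤ ∑' v : s, μ (E v) + ∑' v : ↑sᶜ, μ (E v) := by gcongr
    _ = μ S + μ Sᶜ := by
      rw [ENNReal.summable.tsum_add_tsum_compl (f := fun v => μ (E v)) ENNReal.summable, htot,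
        measure_add_measure_compl hS]

theorem map_eq_sum_dirac_of_tsum_eq_measure_univ {α : Type*} [MeasurableSpace α]
    [MeasurableSingletonClass α] [Countable α] (hcov : ∀ ω, ∃ v, ω ∈ E v)
    (htot : ∑' v, μ (E v) = μ univ) {Z : Ω → α} (hZ : Measurable Z) {π : ι → α}
    (hZE : ∀ v, ∀ ω ∈ E v, Z ω = π v) :
    μ.map Z = Measure.sum fun v => μ (E v) • Measure.dirac (π v) := by
  refine Measure.ext_of_singleton fun a => ?_
  rw [Measure.map_apply hZ (measurableSet_singleton a),
    measure_eq_tsum_of_tsum_eq_measure_univ hcov htot (hZ (measurableSet_singleton a))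
      (s := π ⁻¹' {a}) (fun v hv ω hω => (hZE v ω hω).trans hv)
      (fun v hv ω hω => fun h => hv ((hZE v ω hω).symm.trans h)),
    Measure.sum_apply _ (measurableSet_singleton a), tsum_subtype _ fun v => μ (E v)]
  congr 1 with v
  by_cases h : π v = a <;> simp [h]

end Cover

section Pgf

variable {Ω : Type*} [MeasurableSpace Ω] {μ : Measure Ω}

/-- `E[s ^ X]`, computed in `[0, ∞]`: `ofReal` truncates negative values, so this is the
generating function only for `0 ≤ s`. -/
noncomputable def pgf (μ : Measure Ω) (X : Ω → ℕ) (s : ℝ) : ℝ≥0∞ :=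
  ∫⁻ ω, ENNReal.ofReal (s ^ X ω) ∂μ

theorem pgf_eq_lintegral_map {X : Ω → ℕ} (hX : Measurable X) (s : ℝ) :
    pgf μ X s = ∫⁻ k, ENNReal.ofReal (s ^ k) ∂μ.map X :=
  (lintegral_map (f := fun k : ℕ => ENNReal.ofReal (s ^ k)) measurable_from_top hX).symm

theorem pgf_eq_tsum {X : Ω → ℕ} (hX : Measurable X) (s : ℝ) :
    pgf μ X s = ∑' k, μ {ω | X ω = k} * ENNReal.ofReal (s ^ k) := by
  rw [pgf_eq_lintegral_map hX, lintegral_countable']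
  refine tsum_congr fun k => ?_
  rw [Measure.map_apply hX (measurableSet_singleton k), mul_comm]
  rfl

theorem pgf_congr {X Y : Ω → ℕ} (hX : Measurable X) (hY : Measurable Y)
    (hXY : ∀ k, μ {ω | X ω = k} = μ {ω | Y ω = k}) (s : ℝ) : pgf μ X s = pgf μ Y s := by
  simp only [pgf_eq_tsum hX, pgf_eq_tsum hY, hXY]

theorem pgf_one [IsProbabilityMeasure μ] (X : Ω → ℕ) : pgf μ X 1 = 1 := by
  simp [pgf]

theorem tsum_binomial_thinning_eq_pgf {X : Ω → ℕ} (hX : Measurable X) {r s : ℝ} (hr0 : 0 ≤ r)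
    (hr1 : r ≤ 1) (hs : 0 ≤ s) :
    ∑' x : ℕ × ℕ, μ {ω | X ω = x.1} * ENNReal.ofReal (binomPMF r x.1 x.2)
        * ENNReal.ofReal (s ^ x.2) = pgf μ X (r * (s - 1) + 1) := by
  rw [ENNReal.tsum_prod', pgf_eq_tsum hX]
  refine tsum_congr fun k => ?_
  simp_rw [mul_assoc]
  rw [ENNReal.tsum_mul_left, tsum_ofReal_binomPMF_mul_pow hr0 hr1 hs]

theorem pgf_eq_mul_pgf_of_binomial_thinning [IsProbabilityMeasure μ] {p q : ℝ} (hp0 : 0 ≤ p)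
    (hp1 : p ≤ 1) (hq0 : 0 ≤ q) (hq1 : q ≤ 1) {X Y R A Z : Ω → ℕ} (hX : Measurable X)
    (hY : Measurable Y) (hZ : Measurable Z) (hZRA : ∀ ω, Z ω = R ω + A ω)
    (hbinom : ∀ k m i j, μ {ω | X ω = k ∧ Y ω = m ∧ R ω = i ∧ A ω = j}
        = μ {ω | X ω = k ∧ Y ω = m} * ENNReal.ofReal (binomPMF p k i * binomPMF q m j))
    (hind : ∀ k m, μ {ω | X ω = k ∧ Y ω = m} = μ {ω | X ω = k} * μ {ω | Y ω = m})
    {s : ℝ} (hs : 0 ≤ s) :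
    pgf μ Z s = pgf μ X (p * (s - 1) + 1) * pgf μ Y (q * (s - 1) + 1) := by
  set E : (ℕ × ℕ) × (ℕ × ℕ) → Set Ω :=
    fun v => {ω | X ω = v.1.1 ∧ Y ω = v.2.1 ∧ R ω = v.1.2 ∧ A ω = v.2.2}
  have hE : ∀ v, μ (E v) = μ {ω | X ω = v.1.1} * ENNReal.ofReal (binomPMF p v.1.1 v.1.2)
      * (μ {ω | Y ω = v.2.1} * ENNReal.ofReal (binomPMF q v.2.1 v.2.2)) := by
    rintro ⟨⟨k, i⟩, ⟨m, j⟩⟩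
    rw [hbinom, hind, ENNReal.ofReal_mul (binomPMF_nonneg hp0 hp1 k i)]
    ring
  have hsum : ∀ {u : ℝ}, 0 ≤ u → ∑' v, μ (E v) * ENNReal.ofReal (u ^ (v.1.2 + v.2.2))
      = pgf μ X (p * (u - 1) + 1) * pgf μ Y (q * (u - 1) + 1) := by
    intro u hu
    rw [← tsum_binomial_thinning_eq_pgf hX hp0 hp1 hu,
      ← tsum_binomial_thinning_eq_pgf hY hq0 hq1 hu, ENNReal.tsum_mul_tsum]
    refine tsum_congr fun v => ?_
    rw [hE, pow_add, ENNReal.ofReal_mul (pow_nonneg hu _)]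
    ring
  have htot : ∑' v, μ (E v) = μ univ := by
    simpa [pgf_one] using hsum zero_le_one
  have hcov : ∀ ω, ∃ v, ω ∈ E v := fun ω => ⟨((X ω, R ω), (Y ω, A ω)), rfl, rfl, rfl, rfl⟩
  have hZE : ∀ v, ∀ ω ∈ E v, Z ω = v.1.2 + v.2.2 := by
    rintro v ω ⟨-, -, hR, hA⟩
    rw [hZRA, hR, hA]
  rw [pgf_eq_lintegral_map hZ, map_eq_sum_dirac_of_tsum_eq_measure_univ hcov htot hZ hZE,
    lintegral_sum_measure, ← hsum hs]
  simp [lintegral_smul_measure, lintegral_dirac, mul_comm]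

end Pgf

theorem ttbs_generating_function_general
    {Ω : Type*} [MeasurableSpace Ω] (μ : Measure Ω) [IsProbabilityMeasure μ]
    (p q : ℝ) (n : ℕ)
    (hp : 0 < p) (hp1 : p < 1) (hq0 : 0 < q) (hq1 : q ≤ 1)
    (C B R A : ℕ → Ω → ℕ)
    (hmC : ∀ t, Measurable (C t)) (hmB : ∀ t, Measurable (B t))
    (hC0 : ∀ ω, C 0 ω = n)
    (hsum : ∀ t ω, C (t + 1) ω = R (t + 1) ω + A (t + 1) ω)
    (hbinom : ∀ t k m i j,
      μ {ω | C t ω = k ∧ B (t + 1) ω = m ∧ R (t + 1) ω = i ∧ A (t + 1) ω = j}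
        = μ {ω | C t ω = k ∧ B (t + 1) ω = m}
          * ENNReal.ofReal (binomPMF p k i * binomPMF q m j))
    (hBind : ∀ t k m, μ {ω | C t ω = k ∧ B (t + 1) ω = m}
        = μ {ω | C t ω = k} * μ {ω | B (t + 1) ω = m})
    (hBiid : ∀ t m, μ {ω | B (t + 1) ω = m} = μ {ω | B 1 ω = m})
    : ∀ (t : ℕ) (s : ℝ), 0 < s →
      ∫⁻ ω, ENNReal.ofReal (s ^ C t ω) ∂μ
        = (ENNReal.ofReal (p ^ t * (s - 1) + 1)) ^ n
          * ∏ j ∈ Finset.range t,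
              ∫⁻ ω, ENNReal.ofReal ((q * p ^ j * (s - 1) + 1) ^ B 1 ω) ∂μ := by
  intro t
  induction t with
  | zero =>
    intro s hs
    simp [hC0, ENNReal.ofReal_pow hs.le]
  | succ t ih =>
    intro s hs
    have hstep : pgf μ (C (t + 1)) s
        = pgf μ (C t) (p * (s - 1) + 1) * pgf μ (B 1) (q * (s - 1) + 1) := by
      rw [pgf_eq_mul_pgf_of_binomial_thinning hp.le hp1.le hq0.le hq1 (hmC t) (hmB (t + 1))
        (hmC (t + 1)) (hsum t) (hbinom t) (hBind t) hs.le,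
        pgf_congr (hmB (t + 1)) (hmB 1) (hBiid t)]
    unfold pgf at hstep
    rw [hstep, ih _ (by nlinarith), Finset.prod_range_succ', mul_assoc]
    congr 3 <;> ring_nf

/-- For the T-TBS sample-size chain started at `C_0 = n`, the generating
function `m_t(s) = E[s ^ C_t]` satisfies
`m_t(s) = (p^t (s - 1) + 1)^n * ∏_{j=0}^{t-1} G (q p^j (s - 1) + 1)` for all `s > 0`,
where `G(u) = E[u ^ B]` is the common probability generating function of the batch sizes
(all expectations taken in `[0, ∞]`). -/
theorem ttbs_generating_function
    {Ω : Type*} [MeasurableSpace Ω] (μ : Measure Ω) [IsProbabilityMeasure μ]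
    (p q b : ℝ) (n : ℕ)
    (hp : 0 < p) (hp1 : p < 1) (hq0 : 0 < q) (hq1 : q ≤ 1) (hb : 0 < b)
    (hbq : b * q = (n : ℝ) * (1 - p))
    (C B R A : ℕ → Ω → ℕ)
    (hmC : ∀ t, Measurable (C t)) (hmB : ∀ t, Measurable (B t))
    (hC0 : ∀ ω, C 0 ω = n)
    (hsum : ∀ t ω, C (t + 1) ω = R (t + 1) ω + A (t + 1) ω)
    (hbinom : ∀ t k m i j,
      μ {ω | C t ω = k ∧ B (t + 1) ω = m ∧ R (t + 1) ω = i ∧ A (t + 1) ω = j}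
        = μ {ω | C t ω = k ∧ B (t + 1) ω = m}
          * ENNReal.ofReal (binomPMF p k i * binomPMF q m j))
    (hBind : ∀ t k m, μ {ω | C t ω = k ∧ B (t + 1) ω = m}
        = μ {ω | C t ω = k} * μ {ω | B (t + 1) ω = m})
    (hBiid : ∀ t m, μ {ω | B (t + 1) ω = m} = μ {ω | B 1 ω = m})
    : ∀ (t : ℕ) (s : ℝ), 0 < s →
      ∫⁻ ω, ENNReal.ofReal (s ^ C t ω) ∂μ
        = (ENNReal.ofReal (p ^ t * (s - 1) + 1)) ^ n
          * ∏ j ∈ Finset.range t,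
              ∫⁻ ω, ENNReal.ofReal ((q * p ^ j * (s - 1) + 1) ^ B 1 ω) ∂μ :=
  ttbs_generating_function_general μ p q n hp hp1 hq0 hq1 C B R A hmC hmB hC0 hsum hbinom hBind
    hBiid
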